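/- arXiv:1202.1692 — 2 statements merged into one kernel-verified Lean document; each statement's English description precedes it below -/
import Mathlib

section
/- Upper bound on free distance of PUM codes: for any (n, k | k1) partial unit memory code (a convolutional code with memory 1 whose generator submatrices satisfy rank G_0 = k and rank G_1 = k1 < k), the free distance satisfies d_free ≤ n - k + k1 + 1. -/
/-- Extension map: embed `Fin m → F` into `Fin k → F` supported on coordinates `≥ k1`. -/
noncomputable def stmt9Ext (F : Type*) [Field F] (k k1 : ℕ) (hkk : k1 < k) :
    (Fin (k - k1) → F) →ₗ[F] (Fin k → F) where
  toFun x p := if h : k1 ≤ (p : ℕ) then x ⟨(p : ℕ) - k1, by omega⟩ else 0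
  map_add' x y := by ext p; by_cases h : k1 ≤ (p : ℕ) <;> simp [h]
  map_smul' c x := by ext p; by_cases h : k1 ≤ (p : ℕ) <;> simp [h]

/-- Upper bound on the free distance of PUM codes: for any `(n, k | k1)`
partial unit memory code, given by `k × n` matrices `G_0` (rank `k`) and `G_1`
(rank `k1 < k`, last `k - k1` rows zero) via `c_j = i_j G_0 + i_{j-1} G_1`, the free
distance — the minimum total Hamming weight of a nonzero (finitely supported) code
sequence — satisfies `d_free ≤ n - k + k1 + 1`. -/
theorem stmt9 (F : Type*) [Field F] [Fintype F] [DecidableEq F]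
    (n k k1 : ℕ) (hk1 : 0 < k1) (hkk : k1 < k) (hkn : k < n)
    (G0 G1 : Matrix (Fin k) (Fin n) F)
    (hG0rank : G0.rank = k) (hG1rank : G1.rank = k1)
    (hG1z : ∀ p : Fin k, k1 ≤ (p : ℕ) → G1 p = 0) :
    let cblock : (ℕ → Fin k → F) → ℕ → Fin n → F := fun i t =>
      Matrix.vecMul (i t) G0 + Matrix.vecMul (if t = 0 then 0 else i (t - 1)) G1
    let S : Set ℕ := { w | ∃ i : ℕ → Fin k → F, ∃ T : ℕ,
      (∀ t, T ≤ t → i t = 0) ∧ (∃ t, cblock i t ≠ 0) ∧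
      w = ∑ t ∈ Finset.range (T + 2), hammingNorm (cblock i t) }
    S.Nonempty ∧ sInf S ≤ n - k + k1 + 1 := by
  intro cblock S
  have hle : k - k1 - 1 ≤ n := by omega
  -- linear map whose kernel gives the desired information word
  let Ext := stmt9Ext F k k1 hkk
  let L : (Fin (k - k1) → F) →ₗ[F] (Fin (k - k1 - 1) → F) :=
    (LinearMap.funLeft F F (Fin.castLE hle)) ∘ₗ (Matrix.vecMulLinear G0) ∘ₗ Ext
  -- L is not injective since dim drops
  have hLnotinj : ¬ Function.Injective L := by
    intro hinj
    have := LinearMap.finrank_le_finrank_of_injective hinj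
    simp [Module.finrank_fintype_fun_eq_card] at this
    omega
  have hker : ∃ x : Fin (k - k1) → F, x ≠ 0 ∧ L x = 0 := by
    rw [← LinearMap.ker_eq_bot] at hLnotinj
    obtain ⟨x, hx, hx0⟩ := (Submodule.ne_bot_iff _).mp hLnotinj
    exact ⟨x, hx0, hx⟩
  obtain ⟨x, hx0, hxker⟩ := hker
  set i0 : Fin k → F := Ext x with hi0def
  -- i0 is nonzero
  have hi0ne : i0 ≠ 0 := by
    intro h
    apply hx0
    ext q
    have := congr_fun h ⟨k1 + (q : ℕ), by omega⟩
    simpa [hi0def, Ext, stmt9Ext, Nat.add_sub_cancel_left, Fin.eta] using this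
  set c : Fin n → F := Matrix.vecMul i0 G0 with hcdef
  -- rows of G0 are linearly independent, so vecMul is injective and c ≠ 0
  have hind : LinearIndependent F (fun i => G0 i) := by
    rw [linearIndependent_iff_card_eq_finrank_span]
    rw [Set.finrank, show (fun i => G0 i) = G0.row from rfl, ← Matrix.rank_eq_finrank_span_row, hG0rank, Fintype.card_fin]
  have hcne : c ≠ 0 := by
    intro h
    apply hi0ne
    apply Matrix.vecMul_injective_iff.mpr hind
    show Matrix.vecMul i0 G0 = Matrix.vecMul 0 G0
    rw [← hcdef, h, Matrix.zero_vecMul]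
  -- first (k - k1 - 1) coordinates of c vanish
  have hcz : ∀ j : Fin n, (j : ℕ) < k - k1 - 1 → c j = 0 := by
    intro j hj
    have := congr_fun hxker ⟨(j : ℕ), hj⟩
    simpa [L, LinearMap.funLeft, Matrix.vecMulLinear, hcdef, hi0def,
      Fin.castLE, Fin.eta] using this
  -- i0 * G1 = 0
  have hG1 : Matrix.vecMul i0 G1 = 0 := by
    ext j
    simp only [Matrix.vecMul, dotProduct, Pi.zero_apply]
    apply Finset.sum_eq_zero
    intro p _
    by_cases h : k1 ≤ (p : ℕ)
    · simp [hG1z p h]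
    · simp [hi0def, Ext, stmt9Ext, h]
  -- the information sequence
  set iseq : ℕ → Fin k → F := fun t => if t = 0 then i0 else 0 with hiseq
  have hc0 : cblock iseq 0 = c := by
    simp [cblock, hiseq, hcdef]
  have hct : ∀ t, 1 ≤ t → cblock iseq t = 0 := by
    intro t ht
    have ht0 : t ≠ 0 := by omega
    rcases Nat.eq_or_lt_of_le ht with h1 | h2
    · simp [cblock, hiseq, ← h1, hG1, Matrix.zero_vecMul]
    · have : t - 1 ≠ 0 := by omega
      simp [cblock, hiseq, ht0, this, Matrix.zero_vecMul]
  have hmem : hammingNorm c ∈ S := by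
    refine ⟨iseq, 1, fun t ht => ?_, ⟨0, by rw [hc0]; exact hcne⟩, ?_⟩
    · have : t ≠ 0 := by omega
      simp [hiseq, this]
    · rw [Finset.sum_range_succ, Finset.sum_range_succ, Finset.sum_range_one,
        hc0, hct 1 le_rfl, hct 2 (by omega)]
      simp
  -- weight bound
  have hwt : hammingNorm c ≤ n - k + k1 + 1 := by
    have hsub : (Finset.univ.filter (fun j : Fin n => c j ≠ 0)) ⊆
        Finset.Ici (⟨k - k1 - 1, by omega⟩ : Fin n) := by
      intro j hj
      simp only [Finset.mem_filter, Finset.mem_univ, true_and] at hj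
      simp only [Finset.mem_Ici, Fin.le_def]
      by_contra h
      exact hj (hcz j (by omega))
    have hcard : (Finset.Ici (⟨k - k1 - 1, by omega⟩ : Fin n)).card = n - (k - k1 - 1) :=
      Fin.card_Ici _
    calc hammingNorm c = (Finset.univ.filter (fun j : Fin n => c j ≠ 0)).card := by
          rfl
      _ ≤ n - (k - k1 - 1) := hcard ▸ Finset.card_le_card hsub
      _ ≤ n - k + k1 + 1 := by omega
  exact ⟨⟨_, hmem⟩, le_trans (Nat.sInf_le hmem) hwt⟩
end

section
/- Information reconstruction from ℓ+1 consecutive code blocks: in the arbitrary-rate PUM construction with G_tot MDS (full row rank), knowledge of the code blocks c_j, c_{j+1}, ..., c_{j+ℓ} uniquely determines the information block i_j and the first k1 symbols of i_{j-1}. Equivalently, the linear map (i_{j-1}^{[k1]}, i_j, ..., i_{j+ℓ}) ↦ (c_j, ..., c_{j+ℓ}) is injective in its components determining (i_{j-1}^{[k1]}, i_j). -/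
open Finset

lemma pum_key (F : Type*) [Field F]
    (n k k1 φ : ℕ) (hφ : 0 < φ) (hφk1 : φ < k1) (hk1k : k1 < k)
    (A : Fin (k1 - φ) → Fin n → F) (Φ : Fin φ → Fin n → F)
    (G01 : Fin (k - k1) → Fin n → F) (B : Fin (k1 - φ) → Fin n → F)
    (G0 G1 : Matrix (Fin k) (Fin n) F)
    (Gtot : Matrix (Fin (k + k1 - φ)) (Fin n) F)
    (hG0A : ∀ (p : Fin k) (h : (p : ℕ) < k1 - φ), G0 p = A ⟨(p : ℕ), h⟩)
    (hG0Φ : ∀ (p : Fin k) (h1 : k1 - φ ≤ (p : ℕ)) (h2 : (p : ℕ) < k1),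
      G0 p = Φ ⟨(p : ℕ) - (k1 - φ), by omega⟩)
    (hG0G01 : ∀ (p : Fin k) (h : k1 ≤ (p : ℕ)),
      G0 p = G01 ⟨(p : ℕ) - k1, by have := p.isLt; omega⟩)
    (hG1Φ : ∀ (p : Fin k) (h : (p : ℕ) < φ), G1 p = Φ ⟨(p : ℕ), h⟩)
    (hG1B : ∀ (p : Fin k) (h1 : φ ≤ (p : ℕ)) (h2 : (p : ℕ) < k1),
      G1 p = B ⟨(p : ℕ) - φ, by omega⟩)
    (hG1z : ∀ (p : Fin k) (h : k1 ≤ (p : ℕ)), G1 p = 0)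
    (hGtotA : ∀ (p : Fin (k + k1 - φ)) (h : (p : ℕ) < k1 - φ), Gtot p = A ⟨(p : ℕ), h⟩)
    (hGtotΦ : ∀ (p : Fin (k + k1 - φ)) (h1 : k1 - φ ≤ (p : ℕ)) (h2 : (p : ℕ) < k1),
      Gtot p = Φ ⟨(p : ℕ) - (k1 - φ), by omega⟩)
    (hGtotG01 : ∀ (p : Fin (k + k1 - φ)) (h1 : k1 ≤ (p : ℕ)) (h2 : (p : ℕ) < k),
      Gtot p = G01 ⟨(p : ℕ) - k1, by omega⟩)
    (hGtotB : ∀ (p : Fin (k + k1 - φ)) (h : k ≤ (p : ℕ)),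
      Gtot p = B ⟨(p : ℕ) - k, by have := p.isLt; omega⟩)
    (hLI : LinearIndependent F (fun p => Gtot p))
    (x y : Fin k → F)
    (hxy : Matrix.vecMul x G0 + Matrix.vecMul y G1 = 0) :
    (∀ m (hm : m < k), m < k1 - φ → x ⟨m, hm⟩ = 0) ∧
    (∀ m (hm : m < k), k1 ≤ m → x ⟨m, hm⟩ = 0) ∧
    (∀ m (hm : m < k), φ ≤ m → m < k1 → y ⟨m, hm⟩ = 0) ∧
    (∀ m (hm : m < φ), x ⟨m + (k1 - φ), by omega⟩ + y ⟨m, by omega⟩ = 0) := by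
  classical
  set a := k1 - φ with ha
  set xe : ℕ → F := fun m => if h : m < k then x ⟨m, h⟩ else 0 with hxe
  set ye : ℕ → F := fun m => if h : m < k then y ⟨m, h⟩ else 0 with hye
  set ce : ℕ → F := fun m =>
    xe m + (if a ≤ m ∧ m < k1 then ye (m - a) else 0)
      + (if k ≤ m then ye (m - k + φ) else 0) with hce
  set G0e : ℕ → Fin n → F := fun m => if h : m < k then G0 ⟨m, h⟩ else 0 with hG0e
  set G1e : ℕ → Fin n → F := fun m => if h : m < k then G1 ⟨m, h⟩ else 0 with hG1e
  set Gte : ℕ → Fin n → F := fun m => if h : m < k + k1 - φ then Gtot ⟨m, h⟩ else 0 with hGte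
  have hG0row : ∀ m, m < k → Gte m = G0e m := by
    intro m hm
    have hmN : m < k + k1 - φ := by omega
    simp only [hGte, hG0e]
    rw [dif_pos hmN, dif_pos hm]
    rcases lt_or_ge m a with h1 | h1
    · rw [hGtotA _ h1, hG0A _ h1]
    · rcases lt_or_ge m k1 with h2 | h2
      · rw [hGtotΦ _ h1 h2, hG0Φ _ h1 h2]
      · rw [hGtotG01 _ h2 hm, hG0G01 _ h2]
  have hG1Φrow : ∀ m, m < φ → G1e m = Gte (m + a) := by
    intro m hm
    have h1 : m < k := by omega
    have h2 : m + a < k + k1 - φ := by omega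
    simp only [hGte, hG1e]
    rw [dif_pos h1, dif_pos h2, hG1Φ _ hm,
      hGtotΦ _ (show a ≤ m + a by omega) (show m + a < k1 by omega)]
    exact congrArg Φ (Fin.ext (show m = m + a - a by omega))
  have hG1Brow : ∀ m, φ ≤ m → m < k1 → G1e m = Gte (m - φ + k) := by
    intro m hm1 hm2
    have h1 : m < k := by omega
    have h2 : m - φ + k < k + k1 - φ := by omega
    simp only [hGte, hG1e]
    rw [dif_pos h1, dif_pos h2, hG1B _ hm1 hm2, hGtotB _ (show k ≤ m - φ + k by omega)]
    refine congrArg _ (Fin.ext ?_)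
    show m - φ = m - φ + k - k
    omega
  -- vecMul as range sums
  have hvx : Matrix.vecMul x G0 = ∑ m ∈ range k, xe m • G0e m := by
    rw [← Fin.sum_univ_eq_sum_range (fun m => xe m • G0e m) k]
    ext j
    simp only [Matrix.vecMul, dotProduct, Finset.sum_apply, Pi.smul_apply, smul_eq_mul]
    refine Finset.sum_congr rfl fun p _ => ?_
    simp [hxe, hG0e, p.isLt]
  have hvy : Matrix.vecMul y G1 = ∑ m ∈ range k, ye m • G1e m := by
    rw [← Fin.sum_univ_eq_sum_range (fun m => ye m • G1e m) k]
    ext j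
    simp only [Matrix.vecMul, dotProduct, Finset.sum_apply, Pi.smul_apply, smul_eq_mul]
    refine Finset.sum_congr rfl fun p _ => ?_
    simp [hye, hG1e, p.isLt]
  have hkN : k ≤ k + k1 - φ := by omega
  have hmain : ∑ m ∈ range (k + k1 - φ), ce m • Gte m
      = (∑ m ∈ range k, xe m • G0e m) + ∑ m ∈ range k, ye m • G1e m := by
    have hsplitL : ∑ m ∈ range (k + k1 - φ), ce m • Gte m
        = (∑ m ∈ Ico 0 k, ce m • Gte m) + ∑ m ∈ Ico k (k + k1 - φ), ce m • Gte m := by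
      rw [Finset.sum_Ico_consecutive _ (Nat.zero_le k) hkN, Nat.Ico_zero_eq_range]
    have hpart1 : ∑ m ∈ Ico 0 k, ce m • Gte m
        = (∑ m ∈ range k, xe m • G0e m)
          + ∑ m ∈ range k, (if a ≤ m ∧ m < k1 then ye (m - a) else 0) • Gte m := by
      rw [Nat.Ico_zero_eq_range, ← Finset.sum_add_distrib]
      refine Finset.sum_congr rfl fun m hm => ?_
      rw [Finset.mem_range] at hm
      simp only [hce]
      rw [if_neg (by omega : ¬ k ≤ m), add_zero, add_smul, hG0row m hm]
    have hpart2 : ∑ m ∈ range k, (if a ≤ m ∧ m < k1 then ye (m - a) else 0) • Gte m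
        = ∑ m ∈ range φ, ye m • G1e m := by
      rw [← Finset.sum_subset (show Ico a k1 ⊆ range k by
            intro m hm; rw [Finset.mem_Ico] at hm; rw [Finset.mem_range]; omega)
          (fun m hm hm' => by
            rw [Finset.mem_Ico] at hm'
            rw [if_neg hm', zero_smul])]
      rw [Finset.sum_Ico_eq_sum_range, show k1 - a = φ by omega]
      refine Finset.sum_congr rfl fun m hm => ?_
      rw [Finset.mem_range] at hm
      rw [if_pos (show a ≤ a + m ∧ a + m < k1 by omega), hG1Φrow m hm,
        show a + m - a = m by omega, show a + m = m + a by omega]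
    have hpart3 : ∑ m ∈ Ico k (k + k1 - φ), ce m • Gte m
        = ∑ m ∈ Ico φ k1, ye m • G1e m := by
      rw [Finset.sum_Ico_eq_sum_range, Finset.sum_Ico_eq_sum_range,
        show k + k1 - φ - k = k1 - φ by omega]
      refine Finset.sum_congr rfl fun m hm => ?_
      rw [Finset.mem_range] at hm
      simp only [hce, hxe]
      rw [dif_neg (show ¬ k + m < k by omega), if_neg (show ¬ (a ≤ k + m ∧ k + m < k1) by omega),
        if_pos (show k ≤ k + m by omega), zero_add, zero_add,
        hG1Brow (φ + m) (by omega) (by omega),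
        show k + m - k + φ = φ + m by omega, show φ + m - φ + k = k + m by omega]
    have hy3 : ∑ m ∈ range k, ye m • G1e m
        = (∑ m ∈ range φ, ye m • G1e m) + ∑ m ∈ Ico φ k1, ye m • G1e m := by
      have e1 : ∑ m ∈ Ico k1 k, ye m • G1e m = 0 := by
        refine Finset.sum_eq_zero fun m hm => ?_
        rw [Finset.mem_Ico] at hm
        have e2 : G1e m = 0 := by
          simp only [hG1e]
          rw [dif_pos (show m < k by omega)]
          exact hG1z _ hm.1
        rw [e2, smul_zero]
      rw [← Nat.Ico_zero_eq_range,
        ← Finset.sum_Ico_consecutive _ (Nat.zero_le φ) (show φ ≤ k by omega),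
        ← Finset.sum_Ico_consecutive _ (show φ ≤ k1 by omega) (show k1 ≤ k by omega),
        e1, add_zero, Nat.Ico_zero_eq_range]
    rw [hsplitL, hpart1, hpart2, hpart3, hy3]
    abel
  have hFin : ∑ p : Fin (k + k1 - φ), ce (p : ℕ) • Gtot p = 0 := by
    have e : ∑ p : Fin (k + k1 - φ), ce (p : ℕ) • Gtot p
        = ∑ m ∈ range (k + k1 - φ), ce m • Gte m := by
      rw [← Fin.sum_univ_eq_sum_range (fun m => ce m • Gte m)]
      refine Finset.sum_congr rfl fun p _ => ?_
      congr 1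
      simp only [hGte]
      rw [dif_pos p.isLt]
    rw [e, hmain, ← hvx, ← hvy, hxy]
  have hz : ∀ m, m < k + k1 - φ → ce m = 0 := by
    intro m hm
    exact Fintype.linearIndependent_iff.mp hLI (fun p => ce (p : ℕ)) hFin ⟨m, hm⟩
  refine ⟨?_, ?_, ?_, ?_⟩
  · intro m hm hm'
    have h := hz m (by omega)
    simp only [hce, hxe] at h
    rw [dif_pos hm, if_neg (show ¬ (a ≤ m ∧ m < k1) by omega),
      if_neg (show ¬ k ≤ m by omega), add_zero, add_zero] at h
    exact h
  · intro m hm hm'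
    have h := hz m (by omega)
    simp only [hce, hxe] at h
    rw [dif_pos hm, if_neg (show ¬ (a ≤ m ∧ m < k1) by omega),
      if_neg (show ¬ k ≤ m by omega), add_zero, add_zero] at h
    exact h
  · intro m hm hm1 hm2
    have h := hz (m - φ + k) (by omega)
    simp only [hce, hxe, hye] at h
    rw [dif_neg (show ¬ m - φ + k < k by omega),
      if_neg (show ¬ (a ≤ m - φ + k ∧ m - φ + k < k1) by omega),
      if_pos (show k ≤ m - φ + k by omega),
      show m - φ + k - k + φ = m by omega, dif_pos hm, zero_add, zero_add] at h
    exact h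
  · intro m hm
    have h := hz (m + a) (by omega)
    simp only [hce, hxe, hye] at h
    rw [dif_pos (show m + a < k by omega), if_pos (show a ≤ m + a ∧ m + a < k1 by omega),
      if_neg (show ¬ k ≤ m + a by omega), add_zero, show m + a - a = m by omega,
      dif_pos (show m < k by omega)] at h
    exact h




/-- Information reconstruction from `ℓ + 1` consecutive code blocks: in
the arbitrary-rate PUM construction with `Gtot = (A; Φ; G_01; B)` of full row rank
(MDS), knowledge of the code blocks `c_j, c_{j+1}, …, c_{j+ℓ}` uniquely determines the
information block `i_j` and the first `k1` symbols of `i_{j-1}`: if two information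
sequences produce identical blocks `c_j, …, c_{j+ℓ}`, then they agree on `i_j` and on
the first `k1` coordinates of `i_{j-1}`. -/
theorem stmt11 (F : Type*) [Field F] [Fintype F] [DecidableEq F]
    (n k k1 φ ℓ : ℕ) (hφ : 0 < φ) (hφk1 : φ < k1) (hk1k : k1 < k) (hkn : k < n)
    (hKn : k + k1 - φ ≤ n)
    (hℓ : (ℓ : ℤ) = ⌈(φ : ℚ) / ((k1 : ℚ) - (φ : ℚ))⌉)
    (A : Fin (k1 - φ) → Fin n → F) (Φ : Fin φ → Fin n → F)
    (G01 : Fin (k - k1) → Fin n → F) (B : Fin (k1 - φ) → Fin n → F)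
    (G0 G1 : Matrix (Fin k) (Fin n) F)
    (Gtot : Matrix (Fin (k + k1 - φ)) (Fin n) F)
    (hG0A : ∀ (p : Fin k) (h : (p : ℕ) < k1 - φ), G0 p = A ⟨(p : ℕ), h⟩)
    (hG0Φ : ∀ (p : Fin k) (h1 : k1 - φ ≤ (p : ℕ)) (h2 : (p : ℕ) < k1),
      G0 p = Φ ⟨(p : ℕ) - (k1 - φ), by omega⟩)
    (hG0G01 : ∀ (p : Fin k) (h : k1 ≤ (p : ℕ)),
      G0 p = G01 ⟨(p : ℕ) - k1, by have := p.isLt; omega⟩)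
    (hG1Φ : ∀ (p : Fin k) (h : (p : ℕ) < φ), G1 p = Φ ⟨(p : ℕ), h⟩)
    (hG1B : ∀ (p : Fin k) (h1 : φ ≤ (p : ℕ)) (h2 : (p : ℕ) < k1),
      G1 p = B ⟨(p : ℕ) - φ, by omega⟩)
    (hG1z : ∀ (p : Fin k) (h : k1 ≤ (p : ℕ)), G1 p = 0)
    (hGtotA : ∀ (p : Fin (k + k1 - φ)) (h : (p : ℕ) < k1 - φ), Gtot p = A ⟨(p : ℕ), h⟩)
    (hGtotΦ : ∀ (p : Fin (k + k1 - φ)) (h1 : k1 - φ ≤ (p : ℕ)) (h2 : (p : ℕ) < k1),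
      Gtot p = Φ ⟨(p : ℕ) - (k1 - φ), by omega⟩)
    (hGtotG01 : ∀ (p : Fin (k + k1 - φ)) (h1 : k1 ≤ (p : ℕ)) (h2 : (p : ℕ) < k),
      Gtot p = G01 ⟨(p : ℕ) - k1, by omega⟩)
    (hGtotB : ∀ (p : Fin (k + k1 - φ)) (h : k ≤ (p : ℕ)),
      Gtot p = B ⟨(p : ℕ) - k, by have := p.isLt; omega⟩)
    (hLI : LinearIndependent F (fun p => Gtot p))
    (hMDS : ∀ c ∈ Submodule.span F (Set.range fun p => Gtot p), c ≠ 0 →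
      n - (k + k1 - φ) + 1 ≤ hammingNorm c) :
    ∀ i i' : ℕ → Fin k → F,
      (∀ t, t ≤ ℓ →
        Matrix.vecMul (i (t + 1)) G0 + Matrix.vecMul (i t) G1 =
          Matrix.vecMul (i' (t + 1)) G0 + Matrix.vecMul (i' t) G1) →
      i 1 = i' 1 ∧ ∀ q : Fin k, (q : ℕ) < k1 → i 0 q = i' 0 q := by

  intro i i' h
  have hd0 : ∀ t, t ≤ ℓ →
      Matrix.vecMul (i (t + 1) - i' (t + 1)) G0 + Matrix.vecMul (i t - i' t) G1 = 0 := by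
    intro t ht
    rw [Matrix.sub_vecMul, Matrix.sub_vecMul, sub_add_sub_comm, h t ht, sub_self]
  have key := fun (t : ℕ) (ht : t ≤ ℓ) =>
    pum_key F n k k1 φ hφ hφk1 hk1k A Φ G01 B G0 G1 Gtot hG0A hG0Φ hG0G01 hG1Φ hG1B hG1z
      hGtotA hGtotΦ hGtotG01 hGtotB hLI (i (t + 1) - i' (t + 1)) (i t - i' t) (hd0 t ht)
  have hφℓ : φ ≤ ℓ * (k1 - φ) := by
    have hpos : (0 : ℚ) < (k1 : ℚ) - (φ : ℚ) := by
      have : (φ : ℚ) < (k1 : ℚ) := by exact_mod_cast hφk1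
      linarith
    have h1 : (φ : ℚ) / ((k1 : ℚ) - (φ : ℚ)) ≤ ((ℓ : ℤ) : ℚ) := by
      rw [hℓ]; exact Int.le_ceil _
    rw [div_le_iff₀ hpos] at h1
    have h2 : (φ : ℚ) ≤ (ℓ : ℚ) * ((k1 : ℚ) - (φ : ℚ)) := by push_cast at h1 ⊢; linarith
    have h3 : ((ℓ * (k1 - φ) : ℕ) : ℚ) = (ℓ : ℚ) * ((k1 : ℚ) - (φ : ℚ)) := by
      push_cast [Nat.cast_sub hφk1.le]; ring
    have h4 : (φ : ℚ) ≤ ((ℓ * (k1 - φ) : ℕ) : ℚ) := by rw [h3]; exact h2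
    exact_mod_cast h4
  have chain : ∀ M t q (hq : q < φ), φ ≤ q + (ℓ - t) * (k1 - φ) → ℓ - t ≤ M →
      (i t - i' t) ⟨q, by omega⟩ = 0 := by
    intro M
    induction M with
    | zero =>
      intro t q hq hinv hM
      exfalso
      have h0 : ℓ - t = 0 := by omega
      rw [h0, zero_mul, add_zero] at hinv
      omega
    | succ M ih =>
      intro t q hq hinv hM
      have hlt : t < ℓ := by
        rcases Nat.lt_or_ge t ℓ with h' | h'
        · exact h'
        · exfalso
          have h0 : ℓ - t = 0 := by omega
          rw [h0, zero_mul, add_zero] at hinv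
          omega
      obtain ⟨k1e, k2e, k3e, k4e⟩ := key t hlt.le
      have hrel := k4e q hq
      have hz1 : (i (t + 1) - i' (t + 1)) ⟨q + (k1 - φ), by omega⟩ = 0 := by
        rcases Nat.lt_or_ge (q + (k1 - φ)) φ with hcase | hcase
        · have hinv' : φ ≤ q + (k1 - φ) + (ℓ - (t + 1)) * (k1 - φ) := by
            have e1 : (ℓ - t) = (ℓ - (t + 1)) + 1 := by omega
            rw [e1, add_mul, one_mul] at hinv
            omega
          exact ih (t + 1) (q + (k1 - φ)) hcase hinv' (by omega)
        · obtain ⟨_, _, k3e', _⟩ := key (t + 1) hlt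
          exact k3e' (q + (k1 - φ)) (by omega) hcase (by omega)
      have hrel' : (i (t + 1) - i' (t + 1)) ⟨q + (k1 - φ), by omega⟩
          + (i t - i' t) ⟨q, by omega⟩ = 0 := hrel
      rw [hz1, zero_add] at hrel'
      exact hrel'
  have hd00 : ∀ q : Fin k, (q : ℕ) < k1 → (i 0 - i' 0) q = 0 := by
    intro q hq
    rcases Nat.lt_or_ge (q : ℕ) φ with h1 | h1
    · have hc := chain ℓ 0 (q : ℕ) h1 (by rw [Nat.sub_zero]; omega) (by omega)
      have e : (⟨(q : ℕ), q.isLt⟩ : Fin k) = q := Fin.eta q q.isLt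
      rwa [e] at hc
    · obtain ⟨_, _, k3e, _⟩ := key 0 (Nat.zero_le ℓ)
      have hc := k3e (q : ℕ) q.isLt h1 hq
      have e : (⟨(q : ℕ), q.isLt⟩ : Fin k) = q := Fin.eta q q.isLt
      rwa [e] at hc
  constructor
  · funext p
    have hp : (i 1 - i' 1) p = 0 := by
      obtain ⟨k1e, k2e, k3e, k4e⟩ := key 0 (Nat.zero_le ℓ)
      rcases Nat.lt_or_ge (p : ℕ) (k1 - φ) with h1 | h1
      · have hc := k1e (p : ℕ) p.isLt h1
        rwa [Fin.eta] at hc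
      · rcases Nat.lt_or_ge (p : ℕ) k1 with h2 | h2
        · have hm : (p : ℕ) - (k1 - φ) < φ := by omega
          have hrel := k4e ((p : ℕ) - (k1 - φ)) hm
          have hy0 : (i 0 - i' 0) ⟨(p : ℕ) - (k1 - φ), by omega⟩ = 0 :=
            hd00 ⟨(p : ℕ) - (k1 - φ), by omega⟩ (by simp; omega)
          rw [hy0, add_zero] at hrel
          have e : (⟨(p : ℕ) - (k1 - φ) + (k1 - φ), by omega⟩ : Fin k) = p :=
            Fin.ext (by simp; omega)
          rwa [e] at hrel
        · have hc := k2e (p : ℕ) p.isLt h2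
          rwa [Fin.eta] at hc
    have hp' : i 1 p - i' 1 p = 0 := hp
    exact sub_eq_zero.mp hp'
  · intro q hq
    have hp' : i 0 q - i' 0 q = 0 := hd00 q hq
    exact sub_eq_zero.mp hp'
end
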